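/- arXiv:1902.01572 — 6 statements merged into one kernel-verified Lean document; each statement's English description precedes it below -/
import Mathlib

section
/- Let f be a convex function on ℝ^n with minimizer x*, set R = ‖x^0 − x*‖₂, and assume every subgradient g of f at any point x with ‖x − x*‖₂ ≤ √2·R satisfies ‖g‖₂ ≤ M. Let N ≥ 1, h = R/(M√N), and define x^{k+1} = x^k − h g^k where g^k is a subgradient of f at x^k. Then the average x̄^N = (1/N)·Σ_{k=0}^{N−1} x^k satisfies f(x̄^N) − f(x*) ≤ M R/√N. -/
/-!
For a subgradient `g` of `f` at `x` and a step `h ≥ 0`,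
`‖x - h g - x*‖² ≤ ‖x - x*‖² - 2h (f x - f x*) + h² ‖g‖²`. Summing these one-step bounds while
`‖g‖ ≤ M` gives `‖x_k - x*‖² + 2h ∑_{j<k} (f x_j - f x*) ≤ R² + k h² M²`. The gaps are
nonnegative and `N h² M² = R²` for the chosen step, so every iterate before `N` stays in the ball
of radius `√2 R` where subgradients are bounded by `M`, and the induction closes. Jensen's
inequality then bounds the gap at the average by `(R² + N h² M²) / (2hN) = M R / √N`.
-/

open scoped RealInnerProductSpace
open Finset

theorem ConvexOn.map_finset_average_le {𝕜 E ι : Type*} [Field 𝕜] [LinearOrder 𝕜]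
    [IsStrictOrderedRing 𝕜] [AddCommGroup E] [Module 𝕜 E] {D : Set E} {f : E → 𝕜}
    (hf : ConvexOn 𝕜 D f) {s : Finset ι} (hs : s.Nonempty) {p : ι → E} (hp : ∀ i ∈ s, p i ∈ D) :
    f ((#s : 𝕜)⁻¹ • ∑ i ∈ s, p i) ≤ (#s : 𝕜)⁻¹ * ∑ i ∈ s, f (p i) := by
  have hcard : (#s : 𝕜) ≠ 0 := Nat.cast_ne_zero.2 hs.card_pos.ne'
  rw [smul_sum, mul_sum]
  exact hf.map_sum_le (fun _ _ => by positivity) (by simp [hcard]) hp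

section SubgradientMethod

variable {E : Type*} [NormedAddCommGroup E] [InnerProductSpace ℝ E]

theorem norm_sub_smul_sub_sq_le_of_subgradient {f : E → ℝ} {x g z : E} {h : ℝ}
    (hg : f x + ⟪g, z - x⟫ ≤ f z) (hh : 0 ≤ h) :
    ‖x - h • g - z‖ ^ 2 ≤ ‖x - z‖ ^ 2 - 2 * h * (f x - f z) + h ^ 2 * ‖g‖ ^ 2 := by
  have hexpand : ‖x - h • g - z‖ ^ 2 = ‖x - z‖ ^ 2 - 2 * h * ⟪g, x - z⟫ + h ^ 2 * ‖g‖ ^ 2 := by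
    rw [sub_right_comm, norm_sub_sq_real, real_inner_smul_right, real_inner_comm, norm_smul,
      mul_pow, Real.norm_eq_abs, sq_abs]
    ring
  have hgap : f x - f z ≤ ⟪g, x - z⟫ := by
    rw [← neg_sub z x, inner_neg_right]
    linarith
  rw [hexpand]
  linarith [mul_le_mul_of_nonneg_left hgap (by positivity : 0 ≤ 2 * h)]

variable {f : E → ℝ} {z : E} {h M : ℝ} {x g : ℕ → E}

theorem subgradient_method_norm_sq_add_sum_le (hsub : ∀ k, f (x k) + ⟪g k, z - x k⟫ ≤ f z)
    (hrec : ∀ k, x (k + 1) = x k - h • g k) (hh : 0 ≤ h) {K : ℕ} (hg : ∀ k < K, ‖g k‖ ≤ M) :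
    ‖x K - z‖ ^ 2 + 2 * h * ∑ k ∈ range K, (f (x k) - f z)
      ≤ ‖x 0 - z‖ ^ 2 + K * (h ^ 2 * M ^ 2) := by
  induction K with
  | zero => simp
  | succ K ih =>
    have hstep := norm_sub_smul_sub_sq_le_of_subgradient (hsub K) hh
    have hgK : ‖g K‖ ^ 2 ≤ M ^ 2 :=
      pow_le_pow_left₀ (norm_nonneg _) (hg K K.lt_succ_self) 2
    have hprev := ih fun k hk => hg k (hk.trans K.lt_succ_self)
    rw [hrec, sum_range_succ]
    push_cast
    linarith [mul_le_mul_of_nonneg_left hgK (sq_nonneg h)]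

theorem subgradient_method_norm_subgradient_le (hsub : ∀ k, f (x k) + ⟪g k, z - x k⟫ ≤ f z)
    (hrec : ∀ k, x (k + 1) = x k - h • g k) (hh : 0 ≤ h) (hmin : ∀ y, f z ≤ f y) {ρ : ℝ}
    (hbound : ∀ k, ‖x k - z‖ ≤ ρ → ‖g k‖ ≤ M) {K : ℕ}
    (hK : ‖x 0 - z‖ ^ 2 + K * (h ^ 2 * M ^ 2) ≤ ρ ^ 2) (hρ : 0 ≤ ρ) :
    ∀ k < K, ‖g k‖ ≤ M := by
  intro k
  induction k using Nat.strong_induction_on with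
  | _ k ih =>
    intro hk
    apply hbound
    have hdesc :=
      subgradient_method_norm_sq_add_sum_le hsub hrec hh fun j hj => ih j hj (hj.trans hk)
    have hgaps : 0 ≤ ∑ j ∈ range k, (f (x j) - f z) :=
      sum_nonneg fun j _ => sub_nonneg.2 (hmin _)
    have hkK : (k : ℝ) * (h ^ 2 * M ^ 2) ≤ K * (h ^ 2 * M ^ 2) := by gcongr
    refine (pow_le_pow_iff_left₀ (norm_nonneg _) hρ two_ne_zero).1 ?_
    linarith [mul_nonneg (by positivity : 0 ≤ 2 * h) hgaps]

theorem subgradient_method_average_sub_le (hf : ConvexOn ℝ Set.univ f)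
    (hsub : ∀ k, f (x k) + ⟪g k, z - x k⟫ ≤ f z)
    (hrec : ∀ k, x (k + 1) = x k - h • g k) (hh : 0 < h) {N : ℕ} (hN : 0 < N)
    (hg : ∀ k < N, ‖g k‖ ≤ M) :
    f ((N : ℝ)⁻¹ • ∑ k ∈ range N, x k) - f z
      ≤ (‖x 0 - z‖ ^ 2 + N * (h ^ 2 * M ^ 2)) / (2 * h * N) := by
  have hN' : (0 : ℝ) < N := by exact_mod_cast hN
  have hjensen :=
    hf.map_finset_average_le (nonempty_range_iff.2 hN.ne') fun k _ => Set.mem_univ (x k)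
  rw [card_range, le_inv_mul_iff₀ hN'] at hjensen
  have hdesc := subgradient_method_norm_sq_add_sum_le hsub hrec hh.le hg
  rw [sum_sub_distrib, sum_const, card_range, nsmul_eq_mul] at hdesc
  rw [le_div_iff₀ (by positivity)]
  linarith [sq_nonneg ‖x N - z‖, mul_le_mul_of_nonneg_left hjensen (by positivity : 0 ≤ 2 * h)]

end SubgradientMethod

/-- Convergence rate of the fixed-step subgradient method:
`f(x̄_N) - f(x*) ≤ M R / √N`. -/
theorem subgradient_method_rate {n : ℕ}
    (f : EuclideanSpace ℝ (Fin n) → ℝ) (hf : ConvexOn ℝ Set.univ f)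
    (xstar : EuclideanSpace ℝ (Fin n)) (hxstar : ∀ z, f xstar ≤ f z)
    (x0 : EuclideanSpace ℝ (Fin n)) (M R : ℝ) (hM : 0 < M)
    (hR : R = ‖x0 - xstar‖)
    (hMbound : ∀ x gx : EuclideanSpace ℝ (Fin n),
      (∀ z, f x + ⟪gx, z - x⟫ ≤ f z) → ‖x - xstar‖ ≤ Real.sqrt 2 * R → ‖gx‖ ≤ M)
    (N : ℕ) (hN : 1 ≤ N) (h : ℝ) (hh : h = R / (M * Real.sqrt N))
    (x g : ℕ → EuclideanSpace ℝ (Fin n))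
    (hx0 : x 0 = x0)
    (hsub : ∀ k z, f (x k) + ⟪g k, z - x k⟫ ≤ f z)
    (hrec : ∀ k, x (k + 1) = x k - h • g k) :
    f ((N : ℝ)⁻¹ • ∑ k ∈ Finset.range N, x k) - f xstar ≤ M * R / Real.sqrt N := by
  have hN0 : (0 : ℝ) < N := by exact_mod_cast hN
  rcases (hR ▸ norm_nonneg _ : 0 ≤ R).eq_or_lt with hR0 | hRpos
  · -- `R = 0` forces `h = 0`, so the method never leaves `x*`.
    have hstay : ∀ k, x k = xstar := by
      intro k
      induction k with
      | zero => rw [hx0, ← sub_eq_zero, ← norm_eq_zero, ← hR, hR0]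
      | succ k ih => simp [hrec, hh, ← hR0, ih]
    simp [hstay, ← hR0, ← Nat.cast_smul_eq_nsmul ℝ, smul_smul, hN0.ne']
  have hpos : 0 < h := by rw [hh]; positivity
  have hsqrtN : Real.sqrt N ^ 2 = N := Real.sq_sqrt hN0.le
  have hstep : (N : ℝ) * (h ^ 2 * M ^ 2) = R ^ 2 := by
    rw [hh]; field_simp; rw [hsqrtN]
  have hg := subgradient_method_norm_subgradient_le (hsub · xstar) hrec hpos.le hxstar
    (fun k => hMbound _ _ (hsub k)) (K := N)
    (by rw [hx0, ← hR, hstep, mul_pow, Real.sq_sqrt zero_le_two]; linarith) (by positivity)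
  calc _ ≤ _ := subgradient_method_average_sub_le hf (hsub · xstar) hrec hpos hN hg
    _ = M * R / Real.sqrt N := by
      rw [hx0, ← hR, hstep, hh]
      field_simp
      rw [hsqrtN]
      ring
end

section
/- Let f be a convex function on ℝ^n with minimizer x*, set R = ‖x^0 − x*‖₂, and assume every subgradient g of f at any point x with ‖x − x*‖₂ ≤ √2·R satisfies ‖g‖₂ ≤ M. Let N ≥ 1, h = R/(M√N), and define x^{k+1} = x^k − h g^k where g^k is a subgradient of f at x^k. Then for every k = 0, 1, …, N one has ‖x^k − x*‖₂ ≤ √2 · ‖x^0 − x*‖₂. -/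
open scoped RealInnerProductSpace

/-- The iterates of the fixed-step subgradient method stay in the ball of radius
`√2 ‖x⁰ - x*‖` around the optimum. -/
theorem subgradient_method_iterates_bounded {n : ℕ}
    (f : EuclideanSpace ℝ (Fin n) → ℝ) (hf : ConvexOn ℝ Set.univ f)
    (xstar : EuclideanSpace ℝ (Fin n)) (hxstar : ∀ z, f xstar ≤ f z)
    (x0 : EuclideanSpace ℝ (Fin n)) (M R : ℝ) (hM : 0 < M)
    (hR : R = ‖x0 - xstar‖)
    (hMbound : ∀ x gx : EuclideanSpace ℝ (Fin n),
      (∀ z, f x + ⟪gx, z - x⟫ ≤ f z) → ‖x - xstar‖ ≤ Real.sqrt 2 * R → ‖gx‖ ≤ M)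
    (N : ℕ) (hN : 1 ≤ N) (h : ℝ) (hh : h = R / (M * Real.sqrt N))
    (x g : ℕ → EuclideanSpace ℝ (Fin n))
    (hx0 : x 0 = x0)
    (hsub : ∀ k z, f (x k) + ⟪g k, z - x k⟫ ≤ f z)
    (hrec : ∀ k, x (k + 1) = x k - h • g k) :
    ∀ k ≤ N, ‖x k - xstar‖ ≤ Real.sqrt 2 * ‖x0 - xstar‖ := by
  have hR0 : 0 ≤ R := hR ▸ norm_nonneg _
  have hN0 : (0 : ℝ) < N := by exact_mod_cast Nat.lt_of_lt_of_le Nat.zero_lt_one hN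
  have hsN : (0 : ℝ) < Real.sqrt N := Real.sqrt_pos.mpr hN0
  have hh0 : 0 ≤ h := by
    rw [hh]; positivity
  have hh2 : h ^ 2 * M ^ 2 ≤ R ^ 2 / N := by
    rw [hh, div_pow, mul_pow, Real.sq_sqrt hN0.le]
    rw [div_mul_eq_mul_div, div_le_div_iff₀ (by positivity) hN0]
    ring_nf
    nlinarith [sq_nonneg R, sq_nonneg M, hN0]
  have key : ∀ k ≤ N, ‖x k - xstar‖ ^ 2 ≤ R ^ 2 + k * (R ^ 2 / N) := by
    intro k
    induction k with
    | zero => intro _; simp [hx0, ← hR]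
    | succ k ih =>
      intro hk
      have hkN : k ≤ N := Nat.le_of_succ_le hk
      have ihk := ih hkN
      have hlt2 : ‖x k - xstar‖ ^ 2 ≤ 2 * R ^ 2 := by
        have : (k : ℝ) * (R ^ 2 / N) ≤ R ^ 2 := by
          rw [mul_div_assoc']
          rw [div_le_iff₀ hN0]
          have : (k : ℝ) ≤ N := by exact_mod_cast hkN
          nlinarith [sq_nonneg R]
        linarith
      have hbound : ‖x k - xstar‖ ≤ Real.sqrt 2 * R := by
        have h1 : ‖x k - xstar‖ = Real.sqrt (‖x k - xstar‖ ^ 2) := by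
          rw [Real.sqrt_sq (norm_nonneg _)]
        rw [h1]
        calc Real.sqrt (‖x k - xstar‖ ^ 2) ≤ Real.sqrt (2 * R ^ 2) :=
              Real.sqrt_le_sqrt hlt2
          _ = Real.sqrt 2 * R := by
              rw [Real.sqrt_mul (by norm_num), Real.sqrt_sq hR0]
      have hg : ‖g k‖ ≤ M := hMbound _ _ (hsub k) hbound
      have hip : 0 ≤ ⟪x k - xstar, g k⟫ := by
        have h1 := hsub k xstar
        have h2 := hxstar (x k)
        have h3 : ⟪g k, xstar - x k⟫ ≤ 0 := by linarith
        have h4 : ⟪g k, xstar - x k⟫ = - ⟪x k - xstar, g k⟫ := by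
          rw [real_inner_comm, ← inner_neg_left, neg_sub]
        linarith [h4 ▸ h3]
      have hexp : ‖x (k+1) - xstar‖ ^ 2
          = ‖x k - xstar‖ ^ 2 - 2 * h * ⟪x k - xstar, g k⟫ + h ^ 2 * ‖g k‖ ^ 2 := by
        have : x (k+1) - xstar = (x k - xstar) - h • g k := by
          rw [hrec k]; abel
        rw [this, norm_sub_sq_real, real_inner_smul_right, norm_smul]
        simp [abs_of_nonneg hh0, mul_pow]
        ring
      have hgM : h ^ 2 * ‖g k‖ ^ 2 ≤ R ^ 2 / N := by
        calc h ^ 2 * ‖g k‖ ^ 2 ≤ h ^ 2 * M ^ 2 :=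
              mul_le_mul_of_nonneg_left
                (pow_le_pow_left₀ (norm_nonneg _) hg 2) (sq_nonneg h)
          _ ≤ R ^ 2 / N := hh2
      have : ‖x (k+1) - xstar‖ ^ 2 ≤ ‖x k - xstar‖ ^ 2 + R ^ 2 / N := by
        rw [hexp]
        nlinarith [mul_nonneg hh0 hip]
      push_cast
      linarith
  intro k hk
  have h1 := key k hk
  have hlt2 : ‖x k - xstar‖ ^ 2 ≤ 2 * R ^ 2 := by
    have : (k : ℝ) * (R ^ 2 / N) ≤ R ^ 2 := by
      rw [mul_div_assoc', div_le_iff₀ hN0]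
      have : (k : ℝ) ≤ N := by exact_mod_cast hk
      nlinarith [sq_nonneg R]
    linarith
  have h2 : ‖x k - xstar‖ = Real.sqrt (‖x k - xstar‖ ^ 2) := by
    rw [Real.sqrt_sq (norm_nonneg _)]
  rw [h2, ← hR]
  calc Real.sqrt (‖x k - xstar‖ ^ 2) ≤ Real.sqrt (2 * R ^ 2) := Real.sqrt_le_sqrt hlt2
    _ = Real.sqrt 2 * R := by rw [Real.sqrt_mul (by norm_num), Real.sqrt_sq hR0]
end

section
/- In the Nesterov smoothing setup, let f(x) = h(x) + max_{u ∈ Q₂}{⟨Ax, u⟩ − φ(u)} with Q₁, Q₂ convex compact, h convex with L_h-Lipschitz gradient, φ continuous convex, and prox-functions d₁, d₂ on Q₁, Q₂ with D₁ = max_{x ∈ Q₁} d₁(x), D₂ = max_{u ∈ Q₂} d₂(u). If the accelerated gradient method (with Bregman divergence of d₁) is applied to minimize f_μ(x) = h(x) + max_{u ∈ Q₂}{⟨Ax, u⟩ − φ(u) − μ d₂(u)} over Q₁ with μ = (2‖A‖/(N+1))·√(D₁/D₂), then after N iterations the output y^N satisfies 0 ≤ f(y^N) − min_{x ∈ Q₁}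 f(x) ≤ 4‖A‖√(D₁D₂)/(N+1) + 4 L_h D₁/(N+1)². -/
/-!
Write `ψₓ(u) = ⟪A x, u⟫ - φ(u) - μ d₂(u)`. It is `μ`-strongly concave on `Q₂`, so its maximiser
`u_μ(x)` has quadratic growth: `ψₓ(u) + μ/2 ‖u - u_μ(x)‖² ≤ ψₓ(u_μ(x))`. With
`g(a) = ∇h(a) + A* u_μ(a)`, this gives `f_μ` the affine minorant `f_μ(a) + ⟪g(a), w - a⟫` and the
quadratic majorant with constant `L_μ = L_h + ‖A‖²/μ`, and these two inequalities are all the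
accelerated method uses: the potential `C_k f_μ(y_k) + V(z_k, w) - C_k f_μ(w)` never increases,
so `f_μ(y_N) - f_μ(x*) ≤ D₁ / C_N ≤ 4 L_μ D₁ / (N+1)²`, the weights growing like
`C_k ≥ (k+1)² / (4 L_μ)`. Finally `f_μ ≤ f ≤ f_μ + μ D₂`, and the chosen `μ` makes `μ D₂` equal to
the `‖A‖²` part of `4 L_μ D₁ / (N+1)²`.
-/

open scoped RealInnerProductSpace
open Filter Set Topology

section Gradient

variable {E : Type*} [NormedAddCommGroup E] [InnerProductSpace ℝ E] [CompleteSpace E]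
  {f : E → ℝ} {p a b : E}

theorem HasGradientAt.hasDerivAt_comp_lineMap {t : ℝ}
    (hf : HasGradientAt f p (AffineMap.lineMap a b t)) :
    HasDerivAt (fun t => f (AffineMap.lineMap a b t)) ⟪p, b - a⟫ t := by
  have := hf.hasFDerivAt.comp_hasDerivAt t (AffineMap.hasDerivAt_lineMap (a := a) (b := b))
  simpa [Function.comp_def] using this

theorem HasGradientAt.add {g : E → ℝ} {q : E} (hf : HasGradientAt f p a)
    (hg : HasGradientAt g q a) : HasGradientAt (fun x => f x + g x) (p + q) a := by
  rw [hasGradientAt_iff_hasFDerivAt, map_add]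
  exact hf.hasFDerivAt.add hg.hasFDerivAt

theorem HasGradientAt.add_const (hf : HasGradientAt f p a) (c : ℝ) :
    HasGradientAt (fun x => f x + c) p a :=
  hasGradientAt_iff_hasFDerivAt.2 (hf.hasFDerivAt.add_const c)

theorem hasGradientAt_inner_right (q a : E) : HasGradientAt (fun x => ⟪q, x⟫) q a :=
  hasGradientAt_iff_hasFDerivAt.2 (InnerProductSpace.toDual ℝ E q).hasFDerivAt

theorem ConvexOn.add_inner_le_of_hasGradientAt {s : Set E} (hf : ConvexOn ℝ s f)
    (ha : a ∈ s) (hb : b ∈ s) (hp : HasGradientAt f p a) : f a + ⟪p, b - a⟫ ≤ f b := by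
  have hline : ConvexOn ℝ (AffineMap.lineMap a b ⁻¹' s) (f ∘ AffineMap.lineMap a b) :=
    hf.comp_affineMap _
  have hderiv :=
    HasGradientAt.hasDerivAt_comp_lineMap (a := a) (b := b) (t := 0) (by simpa using hp)
  have := hline.le_slope_of_hasDerivAt (x := 0) (y := 1) (by simpa using ha) (by simpa using hb)
    one_pos hderiv
  simp only [slope_def_field, Function.comp_apply, AffineMap.lineMap_apply_one,
    AffineMap.lineMap_apply_zero, sub_zero, div_one] at this
  linarith

theorem IsMinOn.inner_sub_nonneg_of_hasGradientAt {s : Set E} (hs : Convex ℝ s)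
    (hmin : IsMinOn f s a) (ha : a ∈ s) (hb : b ∈ s) (hp : HasGradientAt f p a) :
    0 ≤ ⟪p, b - a⟫ := by
  simpa using hmin.localize.hasFDerivWithinAt_nonneg hp.hasFDerivAt.hasFDerivWithinAt
    (sub_mem_posTangentConeAt_of_segment_subset (hs.segment_subset ha hb))

theorem le_add_inner_add_sq_of_lipschitz_gradient {g : E → E} {L : ℝ}
    (hf : ∀ x, HasGradientAt f (g x) x) (hg : ∀ x y, ‖g x - g y‖ ≤ L * ‖x - y‖) (a b : E) :
    f b ≤ f a + ⟪g a, b - a⟫ + L / 2 * ‖b - a‖ ^ 2 := by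
  set ψ : ℝ → ℝ := fun t =>
    f (AffineMap.lineMap a b t) - t * ⟪g a, b - a⟫ - L / 2 * t ^ 2 * ‖b - a‖ ^ 2
  have hψ : ∀ t, HasDerivAt ψ
      (⟪g (AffineMap.lineMap a b t) - g a, b - a⟫ - L * t * ‖b - a‖ ^ 2) t := by
    intro t
    have := (((hf _).hasDerivAt_comp_lineMap (a := a) (b := b)).sub
      ((hasDerivAt_id t).mul_const ⟪g a, b - a⟫)).sub
        (((hasDerivAt_pow 2 t).const_mul (L / 2)).mul_const (‖b - a‖ ^ 2))
    refine this.congr_deriv ?_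
    rw [inner_sub_left]
    push_cast
    ring
  have hanti : AntitoneOn ψ (Ici 0) := by
    refine antitoneOn_of_hasDerivWithinAt_nonpos (convex_Ici 0)
      (fun t _ => (hψ t).continuousAt.continuousWithinAt) (fun t _ => (hψ t).hasDerivWithinAt) ?_
    intro t ht
    rw [interior_Ici, mem_Ioi] at ht
    have hdist : ‖g (AffineMap.lineMap a b t) - g a‖ ≤ L * (t * ‖b - a‖) := by
      have := hg (AffineMap.lineMap a b t) a
      rwa [← vsub_eq_sub (AffineMap.lineMap a b t), AffineMap.lineMap_vsub_left, vsub_eq_sub,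
        norm_smul, Real.norm_of_nonneg ht.le] at this
    have := real_inner_le_norm (g (AffineMap.lineMap a b t) - g a) (b - a)
    nlinarith [norm_nonneg (b - a)]
  have := hanti (mem_Ici.2 le_rfl) (show (0:ℝ) ≤ 1 by norm_num) zero_le_one
  simp only [ψ, AffineMap.lineMap_apply_one, AffineMap.lineMap_apply_zero] at this
  linarith

end Gradient

section StrongConcavity

variable {E : Type*} [NormedAddCommGroup E] [InnerProductSpace ℝ E] {s : Set E} {m : ℝ}
  {f : E → ℝ}

theorem StrongConcaveOn.add_sq_le_of_isMaxOn (hf : StrongConcaveOn s m f) {u₀ u : E}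
    (hmax : IsMaxOn f s u₀) (hu₀ : u₀ ∈ s) (hu : u ∈ s) :
    f u + m / 2 * ‖u - u₀‖ ^ 2 ≤ f u₀ := by
  set c := m / 2 * ‖u - u₀‖ ^ 2
  have hseg : ∀ t ∈ Ioo (0 : ℝ) 1, f u - f u₀ + (1 - t) * c ≤ 0 := by
    intro t ht
    have hconc := hf.2 hu hu₀ ht.1.le (sub_nonneg.2 ht.2.le) (add_sub_cancel t 1)
    have hle : f _ ≤ f u₀ := hmax (hf.1 hu hu₀ ht.1.le (sub_nonneg.2 ht.2.le) (add_sub_cancel t 1))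
    simp only [smul_eq_mul] at hconc
    have : t * (f u - f u₀ + (1 - t) * c) ≤ 0 := by simp only [c]; linarith
    exact nonpos_of_mul_nonpos_right this ht.1
  have hlim : Tendsto (fun t : ℝ => f u - f u₀ + (1 - t) * c) (𝓝[>] 0)
      (𝓝 (f u - f u₀ + (1 - 0) * c)) :=
    ((continuous_const.add ((continuous_const.sub continuous_id).mul continuous_const)).tendsto
      0).mono_left nhdsWithin_le_nhds
  have := le_of_tendsto hlim (eventually_of_mem (Ioo_mem_nhdsGT one_pos) hseg)
  linarith

theorem strongConcaveOn_inner_sub_sub_mul {φ d : E → ℝ} (hφ : ConvexOn ℝ s φ)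
    (hd : StrongConvexOn s 1 d) {μ : ℝ} (hμ : 0 ≤ μ) (q : E) :
    StrongConcaveOn s μ (fun u => ⟪q, u⟫ - φ u - μ * d u) := by
  refine ⟨hφ.1, fun u hu v hv a b ha hb hab => ?_⟩
  have hφuv := hφ.2 hu hv ha hb hab
  have hduv := hd.2 hu hv ha hb hab
  simp only [smul_eq_mul, inner_add_right, real_inner_smul_right] at hφuv hduv ⊢
  nlinarith [mul_le_mul_of_nonneg_left hduv hμ]

end StrongConcavity

section SupBounds

variable {α : Type*} {Q : Set α} {f d : α → ℝ} {μ D : ℝ} {u₀ : α}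

theorem sub_mul_le_csSup_image (hu₀ : u₀ ∈ Q)
    (hmax : ∀ v ∈ Q, f v - μ * d v ≤ f u₀ - μ * d u₀) (hd : ∀ v ∈ Q, d v ≤ D) (hμ : 0 ≤ μ)
    (hd₀ : 0 ≤ d u₀) : f u₀ - μ * d u₀ ≤ sSup (f '' Q) := by
  have hbdd : BddAbove (f '' Q) := by
    refine ⟨f u₀ - μ * d u₀ + μ * D, ?_⟩
    rintro _ ⟨v, hv, rfl⟩
    nlinarith [hmax v hv, hd v hv]
  linarith [le_csSup hbdd (mem_image_of_mem f hu₀), mul_nonneg hμ hd₀]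

theorem csSup_image_le_add_mul (hQ : Q.Nonempty)
    (hmax : ∀ v ∈ Q, f v - μ * d v ≤ f u₀ - μ * d u₀) (hd : ∀ v ∈ Q, d v ≤ D) (hμ : 0 ≤ μ) :
    sSup (f '' Q) ≤ f u₀ - μ * d u₀ + μ * D :=
  csSup_le (hQ.image f) (by
    rintro _ ⟨v, hv, rfl⟩
    nlinarith [hmax v hv, hd v hv])

end SupBounds

section Smoothing

variable {E₁ E₂ : Type*} [NormedAddCommGroup E₁] [InnerProductSpace ℝ E₁]
  [NormedAddCommGroup E₂] [InnerProductSpace ℝ E₂]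

theorem inner_apply_le_of_mem_upperBounds {A : E₁ →L[ℝ] E₂} {nA : ℝ}
    (hnA : nA ∈ upperBounds {r : ℝ | ∃ (x : E₁) (u : E₂), ‖x‖ ≤ 1 ∧ ‖u‖ ≤ 1 ∧ r = ⟪A x, u⟫})
    (x : E₁) (u : E₂) : ⟪A x, u⟫ ≤ nA * (‖x‖ * ‖u‖) := by
  rcases eq_or_ne x 0 with rfl | hx
  · simp
  rcases eq_or_ne u 0 with rfl | hu
  · simp
  have hunit := hnA ⟨‖x‖⁻¹ • x, ‖u‖⁻¹ • u, by simp [norm_smul, hx], by simp [norm_smul, hu], rfl⟩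
  rw [map_smul, real_inner_smul_left, real_inner_smul_right, ← mul_assoc, ← mul_inv,
    inv_mul_le_iff₀ (by positivity)] at hunit
  linarith [mul_comm ‖u‖ ‖x‖]

variable [CompleteSpace E₁] {h : E₁ → ℝ} {gh : E₁ → E₁} {Astar : E₂ →L[ℝ] E₁}
  {ψ : E₁ → E₂ → ℝ} {Q : Set E₂} {u : E₁ → E₂}

theorem add_inner_le_smoothed (hh : ConvexOn ℝ univ h) (hgh : ∀ x, HasGradientAt h (gh x) x)
    (hψ : ∀ a b v, ψ b v = ψ a v + ⟪Astar v, b - a⟫) (hu : ∀ x, u x ∈ Q)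
    (hmax : ∀ x, IsMaxOn (ψ x) Q (u x)) (a w : E₁) :
    h a + ψ a (u a) + ⟪gh a + Astar (u a), w - a⟫ ≤ h w + ψ w (u w) := by
  have hha := hh.add_inner_le_of_hasGradientAt (mem_univ a) (mem_univ w) (hgh a)
  have hψa : ψ w (u a) ≤ ψ w (u w) := hmax w (hu a)
  rw [hψ a w] at hψa
  rw [inner_add_left]
  linarith

theorem smoothed_le_add_inner_add_sq {Lh nA μ : ℝ} (hgh : ∀ x, HasGradientAt h (gh x) x)
    (hghL : ∀ x y, ‖gh x - gh y‖ ≤ Lh * ‖x - y‖)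
    (hψ : ∀ a b v, ψ b v = ψ a v + ⟪Astar v, b - a⟫) (hμ : 0 < μ)
    (hA : ∀ x v, ⟪Astar v, x⟫ ≤ nA * (‖x‖ * ‖v‖)) (hu : ∀ x, u x ∈ Q)
    (hgrowth : ∀ x, ∀ v ∈ Q, ψ x v + μ / 2 * ‖v - u x‖ ^ 2 ≤ ψ x (u x)) (a b : E₁) :
    h b + ψ b (u b) ≤
      h a + ψ a (u a) + ⟪gh a + Astar (u a), b - a⟫ + (Lh + nA ^ 2 / μ) / 2 * ‖b - a‖ ^ 2 := by
  have hhab := le_add_inner_add_sq_of_lipschitz_gradient hgh hghL a b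
  have hgrow := hgrowth a (u b) (hu b)
  have hop := hA (b - a) (u b - u a)
  rw [map_sub, inner_sub_left] at hop
  have hamgm : nA * (‖b - a‖ * ‖u b - u a‖) ≤
      nA ^ 2 / μ / 2 * ‖b - a‖ ^ 2 + μ / 2 * ‖u b - u a‖ ^ 2 := by
    rw [div_div, ← sub_nonneg]
    have := sq_nonneg (nA * ‖b - a‖ - μ * ‖u b - u a‖)
    field_simp
    nlinarith
  rw [hψ a b, inner_add_left]
  linarith

end Smoothing

section Bregman

variable {E : Type*} [NormedAddCommGroup E] [InnerProductSpace ℝ E] {d : E → ℝ} {gd : E → E}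

def bregman (d : E → ℝ) (gd : E → E) (w v : E) : ℝ := d v - d w - ⟪gd w, v - w⟫

theorem half_sq_le_bregman (hd : ∀ x y, d x + ⟪gd x, y - x⟫ + 1 / 2 * ‖y - x‖ ^ 2 ≤ d y)
    (w v : E) : 1 / 2 * ‖v - w‖ ^ 2 ≤ bregman d gd w v := by
  unfold bregman
  linarith [hd w v]

theorem bregman_le_sub_of_isMinOn [CompleteSpace E] {s : Set E} (hs : Convex ℝ s)
    {x₀ v : E} (hx₀ : x₀ ∈ s) (hv : v ∈ s) (hmin : IsMinOn d s x₀)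
    (hgd : HasGradientAt d (gd x₀) x₀) : bregman d gd x₀ v ≤ d v - d x₀ := by
  unfold bregman
  linarith [hmin.inner_sub_nonneg_of_hasGradientAt hs hx₀ hv hgd]

theorem bregman_three_point [CompleteSpace E] {s : Set E} (hs : Convex ℝ s)
    (hgd : ∀ x, HasGradientAt d (gd x) x) {ℓ : E → ℝ} {p : E}
    (hℓ : ∀ v w, ℓ w = ℓ v + ⟪p, w - v⟫) {z z' w : E}
    (hmin : IsMinOn (fun v => bregman d gd z v + ℓ v) s z') (hz' : z' ∈ s) (hw : w ∈ s) :
    bregman d gd z z' + ℓ z' + bregman d gd z' w ≤ bregman d gd z w + ℓ w := by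
  have hfun : (fun v => bregman d gd z v + ℓ v) =
      fun v => d v + ⟪p - gd z, v⟫ + (ℓ 0 - d z + ⟪gd z, z⟫) := by
    funext v
    rw [bregman, hℓ 0 v]
    simp only [sub_zero, inner_sub_left, inner_sub_right]
    ring
  rw [hfun] at hmin
  have hfoc := hmin.inner_sub_nonneg_of_hasGradientAt hs hz' hw
    (((hgd z').add (hasGradientAt_inner_right _ z')).add_const _)
  simp only [bregman, hℓ z' w, inner_add_left, inner_sub_left, inner_sub_right] at hfoc ⊢
  linarith

end Bregman

section StepSizes

variable {L : ℝ}

theorem sqrt_one_add_le_of_isGreatest_root (hL : 0 < L) {c a : ℝ}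
    (ha : IsGreatest {b | c + b = L * b ^ 2} a) : √(1 + 4 * L * c) ≤ 2 * L * a - 1 := by
  have hdisc : 1 + 4 * L * c = (2 * L * a - 1) ^ 2 := by
    have : c + a = L * a ^ 2 := ha.1
    linear_combination 4 * L * this
  set r := √(1 + 4 * L * c)
  have hr : r ^ 2 = 1 + 4 * L * c := Real.sq_sqrt (hdisc ▸ sq_nonneg _)
  have hroot : (1 + r) / (2 * L) ∈ {b | c + b = L * b ^ 2} := by
    show c + _ = L * _ ^ 2
    field_simp
    linear_combination (-1 : ℝ) * hr
  have := ha.2 hroot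
  rw [div_le_iff₀ (by positivity)] at this
  linarith

theorem sq_add_two_le_four_mul_of_isGreatest_root (hL : 0 < L) {α C : ℕ → ℝ} (hC0 : C 0 = 0)
    (hα : ∀ k, IsGreatest {b | C k + b = L * b ^ 2} (α (k + 1)))
    (hC : ∀ k, C (k + 1) = C k + α (k + 1)) (k : ℕ) :
    ((k : ℝ) + 2) ^ 2 ≤ 4 * L * C (k + 1) := by
  have hstep : ∀ k : ℕ, ((k : ℝ) + 1) ^ 2 ≤ 1 + 4 * L * C k →
      ((k : ℝ) + 2) ^ 2 ≤ 4 * L * C (k + 1) := by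
    intro k hk
    have hsqrt := sqrt_one_add_le_of_isGreatest_root hL (hα k)
    have hk1 : (k : ℝ) + 1 ≤ √(1 + 4 * L * C k) := Real.le_sqrt_of_sq_le hk
    have hCα : 4 * L * C (k + 1) = (2 * L * α (k + 1)) ^ 2 := by
      have : C k + α (k + 1) = L * α (k + 1) ^ 2 := (hα k).1
      rw [hC k, this]
      ring
    rw [hCα]
    exact pow_le_pow_left₀ (by positivity) (by linarith) 2
  have hall : ∀ k : ℕ, ((k : ℝ) + 1) ^ 2 ≤ 1 + 4 * L * C k := by
    intro k
    induction k with
    | zero => simp [hC0]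
    | succ k ih =>
      push_cast
      linarith [hstep k ih]
  exact hstep k (hall k)

end StepSizes

section AcceleratedMethod

variable {E : Type*} [NormedAddCommGroup E] [InnerProductSpace ℝ E] {F : E → ℝ} {g : E → E}
  {L : ℝ}

theorem accelerated_step (hmin : ∀ a w, F a + ⟪g a, w - a⟫ ≤ F w)
    (hmaj : ∀ a b, F b ≤ F a + ⟪g a, b - a⟫ + L / 2 * ‖b - a‖ ^ 2)
    {V : E → E → ℝ} {x y z y' z' w : E} {a c : ℝ} (ha : 0 < a) (hc : 0 ≤ c)
    (hLa : c + a = L * a ^ 2) (hx : x = (c + a)⁻¹ • (a • z + c • y))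
    (hy' : y' = (c + a)⁻¹ • (a • z' + c • y)) (hV : 1 / 2 * ‖z' - z‖ ^ 2 ≤ V z z')
    (hthree : V z z' + a * (F x + ⟪g x, z' - x⟫) + V z' w ≤
      V z w + a * (F x + ⟪g x, w - x⟫)) :
    (c + a) * F y' + V z' w ≤ c * F y + a * F w + V z w := by
  have hs : 0 < c + a := by positivity
  have hxs : (c + a) • x = a • z + c • y := by rw [hx, smul_inv_smul₀ hs.ne']
  have hys : (c + a) • y' = a • z' + c • y := by rw [hy', smul_inv_smul₀ hs.ne']
  have hyx : (c + a) • (y' - x) = a • (z' - z) := by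
    rw [smul_sub, hxs, hys]; module
  have hxz : a • (x - z) = c • (y - x) := by
    linear_combination (norm := module) hxs
  have hinner₁ : (c + a) * ⟪g x, y' - x⟫ = a * ⟪g x, z' - z⟫ := by
    rw [← real_inner_smul_right, hyx, real_inner_smul_right]
  have hinner₂ : a * ⟪g x, x - z⟫ = c * ⟪g x, y - x⟫ := by
    rw [← real_inner_smul_right, hxz, real_inner_smul_right]
  -- `L a² = c + a` is exactly what turns the quadratic term of the majorant into `‖z' - z‖² / 2`
  have hnorm : L * (c + a) * ‖y' - x‖ ^ 2 = ‖z' - z‖ ^ 2 := by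
    have h := congrArg (‖·‖ ^ 2) hyx
    simp only [norm_smul, mul_pow, Real.norm_of_nonneg hs.le, Real.norm_of_nonneg ha.le] at h
    apply mul_left_cancel₀ hs.ne'
    linear_combination L * h - ‖z' - z‖ ^ 2 * hLa
  have hdesc := mul_le_mul_of_nonneg_left (hmaj x y') hs.le
  have hconv₁ := mul_le_mul_of_nonneg_left (hmin x y) hc
  have hconv₂ := mul_le_mul_of_nonneg_left (hmin x w) ha.le
  simp only [inner_sub_right] at hinner₁ hinner₂ hthree hdesc hconv₁ hconv₂
  linarith

theorem accelerated_potential (hmin : ∀ a w, F a + ⟪g a, w - a⟫ ≤ F w)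
    (hmaj : ∀ a b, F b ≤ F a + ⟪g a, b - a⟫ + L / 2 * ‖b - a‖ ^ 2)
    {V : E → E → ℝ} (hV : ∀ v w, 1 / 2 * ‖w - v‖ ^ 2 ≤ V v w) {s : Set E}
    {x y z : ℕ → E} {α C : ℕ → ℝ} (hC0 : C 0 = 0) (hα : ∀ k, 0 < α (k + 1))
    (hCnn : ∀ k, 0 ≤ C k) (hroot : ∀ k, C k + α (k + 1) = L * α (k + 1) ^ 2)
    (hC : ∀ k, C (k + 1) = C k + α (k + 1))
    (hxr : ∀ k, x (k + 1) = (C (k + 1))⁻¹ • (α (k + 1) • z k + C k • y k))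
    (hyr : ∀ k, y (k + 1) = (C (k + 1))⁻¹ • (α (k + 1) • z (k + 1) + C k • y k))
    (hthree : ∀ k, ∀ w ∈ s, V (z k) (z (k + 1)) +
      α (k + 1) * (F (x (k + 1)) + ⟪g (x (k + 1)), z (k + 1) - x (k + 1)⟫) + V (z (k + 1)) w ≤
        V (z k) w + α (k + 1) * (F (x (k + 1)) + ⟪g (x (k + 1)), w - x (k + 1)⟫))
    (k : ℕ) {w : E} (hw : w ∈ s) :
    C k * F (y k) + V (z k) w ≤ C k * F w + V (z 0) w := by
  induction k with
  | zero => simp [hC0]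
  | succ k ih =>
    have hstep := accelerated_step (y' := y (k + 1)) hmin hmaj (hα k) (hCnn k) (hroot k)
      (by rw [hxr k, hC k]) (by rw [hyr k, hC k]) (hV _ _) (hthree k w hw)
    rw [hC k]
    linarith

theorem accelerated_iterates_mem {s : Set E} (hs : Convex ℝ s) {y z : ℕ → E} {α C : ℕ → ℝ}
    (hy0 : y 0 ∈ s) (hz : ∀ k, z (k + 1) ∈ s) (hα : ∀ k, 0 < α (k + 1)) (hCnn : ∀ k, 0 ≤ C k)
    (hC : ∀ k, C (k + 1) = C k + α (k + 1))
    (hyr : ∀ k, y (k + 1) = (C (k + 1))⁻¹ • (α (k + 1) • z (k + 1) + C k • y k)) (k : ℕ) :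
    y k ∈ s := by
  induction k with
  | zero => exact hy0
  | succ k ih =>
    have hpos : 0 < C k + α (k + 1) := add_pos_of_nonneg_of_pos (hCnn k) (hα k)
    rw [hyr k, hC k, smul_add, smul_smul, smul_smul]
    exact hs (hz k) ih (mul_nonneg (inv_nonneg.2 hpos.le) (hα k).le)
      (mul_nonneg (inv_nonneg.2 hpos.le) (hCnn k)) (by field_simp; ring)

theorem accelerated_method_rate [CompleteSpace E] {s : Set E} (hs : Convex ℝ s) (hL : 0 < L)
    (hmin : ∀ a w, F a + ⟪g a, w - a⟫ ≤ F w)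
    (hmaj : ∀ a b, F b ≤ F a + ⟪g a, b - a⟫ + L / 2 * ‖b - a‖ ^ 2)
    {d : E → ℝ} {gd : E → E} (hgd : ∀ x, HasGradientAt d (gd x) x)
    (hdsc : ∀ x y, d x + ⟪gd x, y - x⟫ + 1 / 2 * ‖y - x‖ ^ 2 ≤ d y)
    {x y z : ℕ → E} {α C : ℕ → ℝ} (hx0 : x 0 ∈ s) (hx0min : IsMinOn d s (x 0))
    (hy0 : y 0 = x 0) (hz0 : z 0 = x 0) (hC0 : C 0 = 0)
    (hroot : ∀ k, C k + α (k + 1) = L * α (k + 1) ^ 2)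
    (hlargest : ∀ k, ∀ a : ℝ, C k + a = L * a ^ 2 → a ≤ α (k + 1))
    (hC : ∀ k, C (k + 1) = C k + α (k + 1))
    (hxr : ∀ k, x (k + 1) = (C (k + 1))⁻¹ • (α (k + 1) • z k + C k • y k))
    (hzr : ∀ k, z (k + 1) ∈ s ∧ IsMinOn
      (fun w => bregman d gd (z k) w + α (k + 1) *
        (F (x (k + 1)) + ⟪g (x (k + 1)), w - x (k + 1)⟫)) s (z (k + 1)))
    (hyr : ∀ k, y (k + 1) = (C (k + 1))⁻¹ • (α (k + 1) • z (k + 1) + C k • y k))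
    {N : ℕ} (hN : 1 ≤ N) {w : E} (hw : w ∈ s) :
    y N ∈ s ∧ F (y N) - F w ≤ 4 * L * (d w - d (x 0)) / ((N : ℝ) + 1) ^ 2 := by
  have hα : ∀ k, IsGreatest {b | C k + b = L * b ^ 2} (α (k + 1)) :=
    fun k => ⟨hroot k, hlargest k⟩
  have hαpos : ∀ k, 0 < α (k + 1) := fun k => by
    nlinarith [sqrt_one_add_le_of_isGreatest_root hL (hα k), Real.sqrt_nonneg (1 + 4 * L * C k)]
  have hgrowth := sq_add_two_le_four_mul_of_isGreatest_root hL hC0 hα hC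
  have hCpos : ∀ k, 0 < C (k + 1) := fun k =>
    pos_of_mul_pos_right (lt_of_lt_of_le (by positivity) (hgrowth k)) (by positivity)
  have hCnn : ∀ k, 0 ≤ C k := by
    rintro (_ | k)
    exacts [hC0.ge, (hCpos k).le]
  have hthree := fun k w (hw : w ∈ s) =>
    bregman_three_point hs hgd (p := α (k + 1) • g (x (k + 1))) (fun v w => by
      simp only [inner_sub_right, real_inner_smul_left]; ring) (hzr k).2 (hzr k).1 hw
  have hpot := accelerated_potential hmin hmaj (half_sq_le_bregman hdsc) hC0 hαpos hCnn hroot hC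
    hxr hyr hthree N hw
  have hV0 : bregman d gd (z 0) w ≤ d w - d (x 0) := by
    rw [hz0]
    exact bregman_le_sub_of_isMinOn hs hx0 hw hx0min (hgd _)
  have hVN : 0 ≤ bregman d gd (z N) w :=
    le_trans (by positivity) (half_sq_le_bregman hdsc _ _)
  refine ⟨accelerated_iterates_mem hs (hy0 ▸ hx0) (fun k => (hzr k).1) hαpos hCnn hC hyr N, ?_⟩
  obtain ⟨n, rfl⟩ : ∃ n, N = n + 1 := ⟨N - 1, by omega⟩
  have hd0 : 0 ≤ d w - d (x 0) := sub_nonneg.2 (hx0min hw)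
  calc F (y (n + 1)) - F w ≤ (d w - d (x 0)) / C (n + 1) := by
        rw [le_div_iff₀ (hCpos n)]
        linarith
    _ ≤ 4 * L * (d w - d (x 0)) / (((n + 1 : ℕ) : ℝ) + 1) ^ 2 := by
        rw [div_le_div_iff₀ (hCpos n) (by positivity)]
        push_cast
        nlinarith [hgrowth n]

end AcceleratedMethod

theorem smoothing_error_eq {nA Lh D₁ D₂ n μ : ℝ} (hn : 0 < n) (hD₁ : 0 < D₁)
    (hD₂ : 0 < D₂) (hμ : μ = 2 * nA / n * √(D₁ / D₂)) :
    μ * D₂ + 4 * (Lh + nA ^ 2 / μ) * D₁ / n ^ 2 =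
      4 * nA * √(D₁ * D₂) / n + 4 * Lh * D₁ / n ^ 2 := by
  obtain ⟨a, ha, rfl⟩ : ∃ a, 0 < a ∧ a ^ 2 = D₁ := ⟨√D₁, by positivity, Real.sq_sqrt hD₁.le⟩
  obtain ⟨b, hb, rfl⟩ : ∃ b, 0 < b ∧ b ^ 2 = D₂ := ⟨√D₂, by positivity, Real.sq_sqrt hD₂.le⟩
  rw [hμ, ← div_pow, ← mul_pow, Real.sqrt_sq (by positivity), Real.sqrt_sq (by positivity)]
  field_simp
  ring

theorem nesterov_smoothing_main_general
    {E₁ E₂ : Type*} [NormedAddCommGroup E₁] [InnerProductSpace ℝ E₁] [FiniteDimensional ℝ E₁]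
    [NormedAddCommGroup E₂] [InnerProductSpace ℝ E₂]
    (Q₁ : Set E₁) (hQ₁conv : Convex ℝ Q₁)
    (Q₂ : Set E₂) (hQ₂ne : Q₂.Nonempty)
    (A : E₁ →L[ℝ] E₂) (Astar : E₂ →L[ℝ] E₁)
    (hadj : ∀ (x : E₁) (u : E₂), ⟪A x, u⟫ = ⟪Astar u, x⟫)
    (φ : E₂ → ℝ) (hφconv : ConvexOn ℝ Q₂ φ)
    (h : E₁ → ℝ) (hhconv : ConvexOn ℝ Set.univ h)
    (gh : E₁ → E₁) (Lh : ℝ) (hLh : 0 ≤ Lh)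
    (hgh : ∀ x, HasGradientAt h (gh x) x)
    (hghL : ∀ x y, ‖gh x - gh y‖ ≤ Lh * ‖x - y‖)
    -- the prox-function d₁ on Q₁ and its Bregman divergence
    (d₁ : E₁ → ℝ) (gd₁ : E₁ → E₁)
    (hgd₁ : ∀ x, HasGradientAt d₁ (gd₁ x) x)
    (hd₁sc : ∀ x y, d₁ x + ⟪gd₁ x, y - x⟫ + 1 / 2 * ‖y - x‖ ^ 2 ≤ d₁ y)
    (V₁ : E₁ → E₁ → ℝ) (hV₁ : ∀ w v, V₁ w v = d₁ v - d₁ w - ⟪gd₁ w, v - w⟫)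
    -- the prox-function d₂ on Q₂
    (d₂ : E₂ → ℝ) (hd₂0 : ∀ u ∈ Q₂, 0 ≤ d₂ u)
    (hd₂sc : StrongConvexOn Q₂ 1 d₂)
    (D₁ D₂ : ℝ) (hD₁ : IsGreatest (d₁ '' Q₁) D₁) (hD₂ : IsGreatest (d₂ '' Q₂) D₂)
    (hD₁pos : 0 < D₁) (hD₂pos : 0 < D₂)
    (nA : ℝ) (hnApos : 0 < nA)
    (hnA : IsGreatest {r : ℝ | ∃ (x : E₁) (u : E₂), ‖x‖ ≤ 1 ∧ ‖u‖ ≤ 1 ∧ r = ⟪A x, u⟫} nA)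
    (N : ℕ) (hN : 1 ≤ N)
    (μ : ℝ) (hμdef : μ = 2 * nA / ((N : ℝ) + 1) * Real.sqrt (D₁ / D₂))
    -- the smoothed objective and its maximizer
    (uμ : E₁ → E₂) (huμmem : ∀ x, uμ x ∈ Q₂)
    (huμmax : ∀ x, ∀ u ∈ Q₂,
      ⟪A x, u⟫ - φ u - μ * d₂ u ≤ ⟪A x, uμ x⟫ - φ (uμ x) - μ * d₂ (uμ x))
    (f fμ : E₁ → ℝ)
    (hfdef : ∀ x, f x = h x + sSup ((fun u => ⟪A x, u⟫ - φ u) '' Q₂))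
    (hfμdef : ∀ x, fμ x = h x + (⟪A x, uμ x⟫ - φ (uμ x) - μ * d₂ (uμ x)))
    (Lμ : ℝ) (hLμ : Lμ = Lh + nA ^ 2 / μ)
    -- the accelerated gradient method applied to f_μ on Q₁
    (x y z : ℕ → E₁) (α C : ℕ → ℝ)
    (hx0Q : x 0 ∈ Q₁) (hx0min : IsMinOn d₁ Q₁ (x 0)) (hd₁x0 : d₁ (x 0) = 0)
    (hy0 : y 0 = x 0) (hz0 : z 0 = x 0)
    (hC0 : C 0 = 0)
    (hroot : ∀ k, C k + α (k + 1) = Lμ * α (k + 1) ^ 2)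
    (hlargest : ∀ k, ∀ a : ℝ, C k + a = Lμ * a ^ 2 → a ≤ α (k + 1))
    (hC : ∀ k, C (k + 1) = C k + α (k + 1))
    (hxr : ∀ k, x (k + 1) = (C (k + 1))⁻¹ • (α (k + 1) • z k + C k • y k))
    (hzr : ∀ k, z (k + 1) ∈ Q₁ ∧ IsMinOn
      (fun w => V₁ (z k) w + α (k + 1) *
        (fμ (x (k + 1)) + ⟪gh (x (k + 1)) + Astar (uμ (x (k + 1))), w - x (k + 1)⟫))
      Q₁ (z (k + 1)))
    (hyr : ∀ k, y (k + 1) = (C (k + 1))⁻¹ • (α (k + 1) • z (k + 1) + C k • y k))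
    (xstar : E₁) (hxsQ : xstar ∈ Q₁) (hxsmin : ∀ w ∈ Q₁, f xstar ≤ f w) :
    0 ≤ f (y N) - f xstar ∧
      f (y N) - f xstar ≤ 4 * nA * Real.sqrt (D₁ * D₂) / ((N : ℝ) + 1)
        + 4 * Lh * D₁ / ((N : ℝ) + 1) ^ 2 := by
  obtain rfl : V₁ = bregman d₁ gd₁ := funext₂ hV₁
  subst hLμ
  have hμ : 0 < μ := by rw [hμdef]; positivity
  set ψ : E₁ → E₂ → ℝ := fun x u => ⟪A x, u⟫ - φ u - μ * d₂ u
  have hψ : ∀ a b v, ψ b v = ψ a v + ⟪Astar v, b - a⟫ := by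
    intro a b v
    simp only [ψ, hadj, inner_sub_right]
    ring
  have hmax : ∀ x, IsMaxOn (ψ x) Q₂ (uμ x) := huμmax
  have hgrowth : ∀ x, ∀ v ∈ Q₂, ψ x v + μ / 2 * ‖v - uμ x‖ ^ 2 ≤ ψ x (uμ x) := fun x v hv =>
    (strongConcaveOn_inner_sub_sub_mul hφconv hd₂sc hμ.le (A x)).add_sq_le_of_isMaxOn
      (hmax x) (huμmem x) hv
  have hA : ∀ x v, ⟪Astar v, x⟫ ≤ nA * (‖x‖ * ‖v‖) := fun x v =>
    hadj x v ▸ inner_apply_le_of_mem_upperBounds hnA.2 x v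
  obtain ⟨hyN, hrate⟩ := accelerated_method_rate (F := fμ) hQ₁conv (by positivity)
    (fun a w => by simpa only [hfμdef] using add_inner_le_smoothed hhconv hgh hψ huμmem hmax a w)
    (fun a b => by
      simpa only [hfμdef] using smoothed_le_add_inner_add_sq hgh hghL hψ hμ hA huμmem hgrowth a b)
    hgd₁ hd₁sc hx0Q hx0min hy0 hz0 hC0 hroot hlargest hC hxr hzr hyr hN hxsQ
  have hdD : ∀ w ∈ Q₂, d₂ w ≤ D₂ := fun w hw => hD₂.2 ⟨w, hw, rfl⟩
  have hf_le : f (y N) ≤ fμ (y N) + μ * D₂ := by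
    rw [hfdef, hfμdef]
    linarith [csSup_image_le_add_mul hQ₂ne (huμmax (y N)) hdD hμ.le]
  have hfμ_le : fμ xstar ≤ f xstar := by
    rw [hfdef, hfμdef]
    linarith [sub_mul_le_csSup_image (huμmem xstar) (huμmax xstar) hdD hμ.le (hd₂0 _ (huμmem _))]
  refine ⟨sub_nonneg.2 (hxsmin _ hyN), ?_⟩
  calc f (y N) - f xstar
      ≤ μ * D₂ + 4 * (Lh + nA ^ 2 / μ) * (d₁ xstar - d₁ (x 0)) / ((N : ℝ) + 1) ^ 2 := by
        linarith
    _ ≤ μ * D₂ + 4 * (Lh + nA ^ 2 / μ) * D₁ / ((N : ℝ) + 1) ^ 2 := by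
        rw [hd₁x0, sub_zero]
        gcongr
        exact hD₁.2 ⟨xstar, hxsQ, rfl⟩
    _ = _ := smoothing_error_eq (by positivity) hD₁pos hD₂pos hμdef

/-- Nesterov smoothing combined with the accelerated gradient method: with
`μ = (2‖A‖/(N+1))√(D₁/D₂)`, after `N` iterations applied to `f_μ` on `Q₁`,
`0 ≤ f(y^N) - min_{Q₁} f ≤ 4‖A‖√(D₁D₂)/(N+1) + 4 L_h D₁/(N+1)²`. -/
theorem nesterov_smoothing_main
    {E₁ E₂ : Type*} [NormedAddCommGroup E₁] [InnerProductSpace ℝ E₁] [FiniteDimensional ℝ E₁]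
    [NormedAddCommGroup E₂] [InnerProductSpace ℝ E₂] [FiniteDimensional ℝ E₂]
    (Q₁ : Set E₁) (hQ₁conv : Convex ℝ Q₁) (hQ₁comp : IsCompact Q₁) (hQ₁ne : Q₁.Nonempty)
    (Q₂ : Set E₂) (hQ₂conv : Convex ℝ Q₂) (hQ₂comp : IsCompact Q₂) (hQ₂ne : Q₂.Nonempty)
    (A : E₁ →L[ℝ] E₂) (Astar : E₂ →L[ℝ] E₁)
    (hadj : ∀ (x : E₁) (u : E₂), ⟪A x, u⟫ = ⟪Astar u, x⟫)
    (φ : E₂ → ℝ) (hφc : ContinuousOn φ Q₂) (hφconv : ConvexOn ℝ Q₂ φ)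
    (h : E₁ → ℝ) (hhconv : ConvexOn ℝ Set.univ h)
    (gh : E₁ → E₁) (Lh : ℝ) (hLh : 0 ≤ Lh)
    (hgh : ∀ x, HasGradientAt h (gh x) x)
    (hghL : ∀ x y, ‖gh x - gh y‖ ≤ Lh * ‖x - y‖)
    -- the prox-function d₁ on Q₁ and its Bregman divergence
    (d₁ : E₁ → ℝ) (gd₁ : E₁ → E₁)
    (hgd₁ : ∀ x, HasGradientAt d₁ (gd₁ x) x)
    (hd₁sc : ∀ x y, d₁ x + ⟪gd₁ x, y - x⟫ + 1 / 2 * ‖y - x‖ ^ 2 ≤ d₁ y)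
    (hd₁0 : ∀ x ∈ Q₁, 0 ≤ d₁ x)
    (V₁ : E₁ → E₁ → ℝ) (hV₁ : ∀ w v, V₁ w v = d₁ v - d₁ w - ⟪gd₁ w, v - w⟫)
    -- the prox-function d₂ on Q₂
    (d₂ : E₂ → ℝ) (hd₂c : ContinuousOn d₂ Q₂) (hd₂0 : ∀ u ∈ Q₂, 0 ≤ d₂ u)
    (hd₂sc : StrongConvexOn Q₂ 1 d₂)
    (D₁ D₂ : ℝ) (hD₁ : IsGreatest (d₁ '' Q₁) D₁) (hD₂ : IsGreatest (d₂ '' Q₂) D₂)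
    (hD₁pos : 0 < D₁) (hD₂pos : 0 < D₂)
    (nA : ℝ) (hnApos : 0 < nA)
    (hnA : IsGreatest {r : ℝ | ∃ (x : E₁) (u : E₂), ‖x‖ ≤ 1 ∧ ‖u‖ ≤ 1 ∧ r = ⟪A x, u⟫} nA)
    (N : ℕ) (hN : 1 ≤ N)
    (μ : ℝ) (hμdef : μ = 2 * nA / ((N : ℝ) + 1) * Real.sqrt (D₁ / D₂))
    -- the smoothed objective and its maximizer
    (uμ : E₁ → E₂) (huμmem : ∀ x, uμ x ∈ Q₂)
    (huμmax : ∀ x, ∀ u ∈ Q₂,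
      ⟪A x, u⟫ - φ u - μ * d₂ u ≤ ⟪A x, uμ x⟫ - φ (uμ x) - μ * d₂ (uμ x))
    (f fμ : E₁ → ℝ)
    (hfdef : ∀ x, f x = h x + sSup ((fun u => ⟪A x, u⟫ - φ u) '' Q₂))
    (hfμdef : ∀ x, fμ x = h x + (⟪A x, uμ x⟫ - φ (uμ x) - μ * d₂ (uμ x)))
    (Lμ : ℝ) (hLμ : Lμ = Lh + nA ^ 2 / μ)
    -- the accelerated gradient method applied to f_μ on Q₁
    (x y z : ℕ → E₁) (α C : ℕ → ℝ)
    (hx0Q : x 0 ∈ Q₁) (hx0min : IsMinOn d₁ Q₁ (x 0)) (hd₁x0 : d₁ (x 0) = 0)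
    (hy0 : y 0 = x 0) (hz0 : z 0 = x 0)
    (hC0 : C 0 = 0) (hα0 : α 0 = 0)
    (hroot : ∀ k, C k + α (k + 1) = Lμ * α (k + 1) ^ 2)
    (hlargest : ∀ k, ∀ a : ℝ, C k + a = Lμ * a ^ 2 → a ≤ α (k + 1))
    (hC : ∀ k, C (k + 1) = C k + α (k + 1))
    (hxr : ∀ k, x (k + 1) = (C (k + 1))⁻¹ • (α (k + 1) • z k + C k • y k))
    (hzr : ∀ k, z (k + 1) ∈ Q₁ ∧ IsMinOn
      (fun w => V₁ (z k) w + α (k + 1) *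
        (fμ (x (k + 1)) + ⟪gh (x (k + 1)) + Astar (uμ (x (k + 1))), w - x (k + 1)⟫))
      Q₁ (z (k + 1)))
    (hyr : ∀ k, y (k + 1) = (C (k + 1))⁻¹ • (α (k + 1) • z (k + 1) + C k • y k))
    (xstar : E₁) (hxsQ : xstar ∈ Q₁) (hxsmin : ∀ w ∈ Q₁, f xstar ≤ f w) :
    0 ≤ f (y N) - f xstar ∧
      f (y N) - f xstar ≤ 4 * nA * Real.sqrt (D₁ * D₂) / ((N : ℝ) + 1)
        + 4 * Lh * D₁ / ((N : ℝ) + 1) ^ 2 :=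
  nesterov_smoothing_main_general Q₁ hQ₁conv Q₂ hQ₂ne A Astar hadj φ hφconv h hhconv gh Lh hLh hgh
    hghL d₁ gd₁ hgd₁ hd₁sc V₁ hV₁ d₂ hd₂0 hd₂sc D₁ D₂ hD₁ hD₂ hD₁pos hD₂pos nA hnApos hnA N hN μ
    hμdef uμ huμmem huμmax f fμ hfdef hfμdef Lμ hLμ x y z α C hx0Q hx0min hd₁x0 hy0 hz0 hC0 hroot
    hlargest hC hxr hzr hyr xstar hxsQ hxsmin
end

section
/- Let X ⊆ ℝ^n be convex closed, f convex on X, d differentiable and 1-strongly convex with Bregman divergence V[x](z) = d(z) − d(x) − ⟨∇d(x), z − x⟩, h > 0, δ ≥ 0, x ∈ X, and let g be a δ-subgradient of f at x. If x⁺ = argmin_{z ∈ X} { ⟨h·g, z⟩ + V[x](z) }, then for any z ∈ X: h·(f(x) − f(z)) ≤ h·⟨g, x − z⟩ + h·δ ≤ (h²/2)·‖g‖₂² + h·δ + V[x](z) − V[x⁺](z). -/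
/-!
The first inequality is the `δ`-subgradient inequality multiplied by `h > 0`. For the second,
the first-order optimality condition for `x⁺` on the convex set `X` gives
`⟪h g + ∇d(x⁺) - ∇d(x), z - x⁺⟫ ≥ 0`, and the three-point identity of the Bregman divergence turns
`⟪∇d(x⁺) - ∇d(x), z - x⁺⟫` into `V[x](z) - V[x⁺](z) - V[x](x⁺)`. What remains,
`h ⟪g, x - x⁺⟫ - V[x](x⁺)`, is at most `h²/2 ‖g‖²` by strong convexity
(`V[x](x⁺) ≥ ½‖x - x⁺‖²`) and Young's inequality.
-/

open scoped RealInnerProductSpace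

section Bregman

variable {E : Type*} [NormedAddCommGroup E] [InnerProductSpace ℝ E]

def bregmanDiv (d : E → ℝ) (gd : E → E) (w v : E) : ℝ :=
  d v - d w - ⟪gd w, v - w⟫

variable {d : E → ℝ} {gd : E → E}

theorem half_sq_norm_sub_le_bregmanDiv
    (hdsc : ∀ w v, d w + ⟪gd w, v - w⟫ + 1 / 2 * ‖v - w‖ ^ 2 ≤ d v) (w v : E) :
    1 / 2 * ‖v - w‖ ^ 2 ≤ bregmanDiv d gd w v := by
  unfold bregmanDiv; linarith [hdsc w v]

theorem bregmanDiv_sub_bregmanDiv (w v z : E) :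
    bregmanDiv d gd w z - bregmanDiv d gd v z =
      bregmanDiv d gd w v + ⟪gd v - gd w, z - v⟫ := by
  simp only [bregmanDiv, inner_sub_left, inner_sub_right]; ring

theorem mul_inner_le_sq_norm_add_sq_norm (h : ℝ) (g v : E) :
    h * ⟪g, v⟫ ≤ h ^ 2 / 2 * ‖g‖ ^ 2 + 1 / 2 * ‖v‖ ^ 2 := by
  have := norm_sub_sq_real (h • g) v
  rw [norm_smul, real_inner_smul_left, Real.norm_eq_abs, mul_pow, sq_abs] at this
  nlinarith [sq_nonneg ‖h • g - v‖]

variable [CompleteSpace E]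

theorem inner_sub_nonneg_of_isMinOn {s : Set E} (hs : Convex ℝ s) {φ : E → ℝ} {a g z : E}
    (hmin : IsMinOn φ s a) (ha : a ∈ s) (hφ : HasGradientAt φ g a) (hz : z ∈ s) :
    0 ≤ ⟪g, z - a⟫ := by
  simpa using hmin.localize.hasFDerivWithinAt_nonneg hφ.hasFDerivAt.hasFDerivWithinAt
    (sub_mem_posTangentConeAt_of_segment_subset (hs.segment_subset ha hz))

theorem hasGradientAt_inner_add_bregmanDiv (c w : E) {v : E} (hd : HasGradientAt d (gd v) v) :
    HasGradientAt (fun z => ⟪c, z⟫ + bregmanDiv d gd w z) (c + (gd v - gd w)) v := by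
  rw [hasGradientAt_iff_hasFDerivAt] at hd ⊢
  simp only [bregmanDiv, map_add, map_sub]
  exact (innerSL ℝ c).hasFDerivAt.add ((hd.sub_const _).sub
    ((innerSL ℝ (gd w)).hasFDerivAt.comp v ((hasFDerivAt_id v).sub_const w)))

theorem mul_inner_sub_le_bregmanDiv_sub_of_isMinOn {s : Set E} (hs : Convex ℝ s)
    (hgd : ∀ w, HasGradientAt d (gd w) w)
    (hdsc : ∀ w v, d w + ⟪gd w, v - w⟫ + 1 / 2 * ‖v - w‖ ^ 2 ≤ d v)
    {h : ℝ} {g x xp z : E} (hxp : xp ∈ s)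
    (hmin : IsMinOn (fun z => ⟪h • g, z⟫ + bregmanDiv d gd x z) s xp) (hz : z ∈ s) :
    h * ⟪g, x - z⟫ ≤ h ^ 2 / 2 * ‖g‖ ^ 2 + bregmanDiv d gd x z - bregmanDiv d gd xp z := by
  have hopt : 0 ≤ ⟪h • g + (gd xp - gd x), z - xp⟫ :=
    inner_sub_nonneg_of_isMinOn hs hmin hxp (hasGradientAt_inner_add_bregmanDiv _ _ (hgd xp)) hz
  have hsc := half_sq_norm_sub_le_bregmanDiv hdsc x xp
  rw [norm_sub_rev] at hsc
  calc h * ⟪g, x - z⟫ = h * ⟪g, x - xp⟫ - ⟪h • g, z - xp⟫ := by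
        simp only [inner_sub_right, real_inner_smul_left]; ring
    _ ≤ h * ⟪g, x - xp⟫ + ⟪gd xp - gd x, z - xp⟫ := by rw [inner_add_left] at hopt; linarith
    _ = h * ⟪g, x - xp⟫ - bregmanDiv d gd x xp +
          (bregmanDiv d gd x z - bregmanDiv d gd xp z) := by
        rw [bregmanDiv_sub_bregmanDiv]; ring
    _ ≤ _ := by linarith [mul_inner_le_sq_norm_add_sq_norm h g (x - xp)]

end Bregman

theorem mirror_descent_step_property_delta_subgradient_general {n : ℕ}
    (X : Set (EuclideanSpace ℝ (Fin n))) (hXconv : Convex ℝ X)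
    (f : EuclideanSpace ℝ (Fin n) → ℝ)
    (d : EuclideanSpace ℝ (Fin n) → ℝ)
    (gd : EuclideanSpace ℝ (Fin n) → EuclideanSpace ℝ (Fin n))
    (hgd : ∀ w, HasGradientAt d (gd w) w)
    (hdsc : ∀ w v, d w + ⟪gd w, v - w⟫ + 1 / 2 * ‖v - w‖ ^ 2 ≤ d v)
    (V : EuclideanSpace ℝ (Fin n) → EuclideanSpace ℝ (Fin n) → ℝ)
    (hV : ∀ w v, V w v = d v - d w - ⟪gd w, v - w⟫)
    (h : ℝ) (hh : 0 < h) (δ : ℝ)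
    (x : EuclideanSpace ℝ (Fin n))
    (gx : EuclideanSpace ℝ (Fin n))
    (hgx : ∀ z ∈ X, f x + ⟪gx, z - x⟫ - δ ≤ f z)
    (xp : EuclideanSpace ℝ (Fin n)) (hxpX : xp ∈ X)
    (hxpmin : IsMinOn (fun z => ⟪h • gx, z⟫ + V x z) X xp) :
    ∀ z ∈ X, h * (f x - f z) ≤ h * ⟪gx, x - z⟫ + h * δ ∧
      h * ⟪gx, x - z⟫ + h * δ ≤ h ^ 2 / 2 * ‖gx‖ ^ 2 + h * δ + V x z - V xp z := by
  obtain rfl : V = bregmanDiv d gd := funext fun w => funext (hV w)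
  intro z hz
  refine ⟨?_, ?_⟩
  · have hsub : f x - f z ≤ ⟪gx, x - z⟫ + δ := by
      rw [← neg_sub z x, inner_neg_right]; linarith [hgx z hz]
    linarith [mul_le_mul_of_nonneg_left hsub hh.le]
  · linarith [mul_inner_sub_le_bregmanDiv_sub_of_isMinOn hXconv hgd hdsc hxpX hxpmin hz]

/-- Mirror Descent step property for a `δ`-subgradient: for any `z ∈ X`,
`h (f(x) - f(z)) ≤ h ⟪g, x - z⟫ + h δ ≤ (h²/2)‖g‖² + h δ + V[x](z) - V[x⁺](z)`. -/
theorem mirror_descent_step_property_delta_subgradient {n : ℕ}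
    (X : Set (EuclideanSpace ℝ (Fin n))) (hXconv : Convex ℝ X) (hXcl : IsClosed X)
    (f : EuclideanSpace ℝ (Fin n) → ℝ) (hfconv : ConvexOn ℝ X f)
    (d : EuclideanSpace ℝ (Fin n) → ℝ)
    (gd : EuclideanSpace ℝ (Fin n) → EuclideanSpace ℝ (Fin n))
    (hgd : ∀ w, HasGradientAt d (gd w) w)
    (hdsc : ∀ w v, d w + ⟪gd w, v - w⟫ + 1 / 2 * ‖v - w‖ ^ 2 ≤ d v)
    (V : EuclideanSpace ℝ (Fin n) → EuclideanSpace ℝ (Fin n) → ℝ)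
    (hV : ∀ w v, V w v = d v - d w - ⟪gd w, v - w⟫)
    (h : ℝ) (hh : 0 < h) (δ : ℝ) (hδ : 0 ≤ δ)
    (x : EuclideanSpace ℝ (Fin n)) (hx : x ∈ X)
    (gx : EuclideanSpace ℝ (Fin n))
    (hgx : ∀ z ∈ X, f x + ⟪gx, z - x⟫ - δ ≤ f z)
    (xp : EuclideanSpace ℝ (Fin n)) (hxpX : xp ∈ X)
    (hxpmin : IsMinOn (fun z => ⟪h • gx, z⟫ + V x z) X xp) :
    ∀ z ∈ X, h * (f x - f z) ≤ h * ⟪gx, x - z⟫ + h * δ ∧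
      h * ⟪gx, x - z⟫ + h * δ ≤ h ^ 2 / 2 * ‖gx‖ ^ 2 + h * δ + V x z - V xp z :=
  mirror_descent_step_property_delta_subgradient_general X hXconv f d gd hgd hdsc V hV h hh δ x gx
    hgx xp hxpX hxpmin
end

section
/- Let f be convex and differentiable on a convex set Q ⊆ ℝ^n with Hölder-continuous gradient: ‖∇f(x₁) − ∇f(x₂)‖₂ ≤ L_ν‖x₁ − x₂‖₂^ν for some ν ∈ [0,1] and L_ν ≥ 0. Then for every x, y ∈ Q and every δ > 0: f(y) ≤ f(x) + ⟨∇f(x), y − x⟩ + (L_ν/(1+ν))‖y − x‖₂^{1+ν} ≤ f(x) + ⟨∇f(x), y − x⟩ + (L(δ)/2)‖y − x‖₂² + δ, where L(δ) = ((1−ν)/((1+ν)δ))^{(1−ν)/(1+ν)} · L_ν^{2/(1+ν)}. -/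
/-!
Along the segment `t ↦ x + t • (y - x)` the Hölder condition bounds the growth of the
directional derivative by `L‖y - x‖^(1+ν) t^ν`; integrating (via monotonicity of the
difference with `L/(1+ν) ‖y - x‖^(1+ν) t^(1+ν)`) gives the first inequality. The second is
the weighted AM–GM inequality `X^θ Y^(1-θ) ≤ θX + (1-θ)Y` with `θ = (1+ν)/2`, which trades the
power `t^(1+ν)` for a quadratic term plus the constant `δ`.
-/

open Set

open scoped RealInnerProductSpace

theorem le_add_deriv_add_div_of_deriv_sub_le_rpow {g g' : ℝ → ℝ} {ν M : ℝ} (hν : 0 ≤ ν)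
    (hg : ∀ t ∈ Icc (0 : ℝ) 1, HasDerivAt g (g' t) t)
    (hg' : ∀ t ∈ Ioo (0 : ℝ) 1, g' t - g' 0 ≤ M * t ^ ν) :
    g 1 ≤ g 0 + g' 0 + M / (1 + ν) := by
  have hν1 : 1 + ν ≠ 0 := by positivity
  set φ : ℝ → ℝ := fun t => g t - t * g' 0 - M / (1 + ν) * t ^ (1 + ν)
  have hφ : ∀ t ∈ Icc (0 : ℝ) 1, HasDerivAt φ (g' t - g' 0 - M * t ^ ν) t := by
    intro t ht
    have hpow : HasDerivAt (fun s : ℝ => s ^ (1 + ν)) ((1 + ν) * t ^ ν) t := by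
      simpa using Real.hasDerivAt_rpow_const (x := t) (p := 1 + ν) (Or.inr (by linarith))
    refine (((hg t ht).sub (hasDerivAt_mul_const (g' 0))).sub
      (hpow.const_mul (M / (1 + ν)))).congr_deriv ?_
    field_simp
  have hanti : AntitoneOn φ (Icc 0 1) := by
    refine antitoneOn_of_hasDerivWithinAt_nonpos (f' := fun t => g' t - g' 0 - M * t ^ ν)
      (convex_Icc 0 1)
      (fun t ht => (hφ t ht).continuousAt.continuousWithinAt) (fun t ht => ?_) (fun t ht => ?_)
    all_goals rw [interior_Icc] at ht
    · exact (hφ t (Ioo_subset_Icc_self ht)).hasDerivWithinAt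
    · linarith [hg' t ht]
  have h01 := hanti (left_mem_Icc.2 zero_le_one) (right_mem_Icc.2 zero_le_one) zero_le_one
  simp only [φ, Real.zero_rpow hν1, Real.one_rpow] at h01
  linarith

theorem le_add_fderiv_add_rpow_of_hoelder {E : Type*} [NormedAddCommGroup E]
    [NormedSpace ℝ E] {f : E → ℝ} {f' : E → E →L[ℝ] ℝ} {x y : E}
    {ν L : ℝ} (hν : 0 ≤ ν) (hf : ∀ w ∈ segment ℝ x y, HasFDerivAt f (f' w) w)
    (hH : ∀ w ∈ segment ℝ x y, ‖f' w - f' x‖ ≤ L * ‖w - x‖ ^ ν) :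
    f y ≤ f x + f' x (y - x) + L / (1 + ν) * ‖y - x‖ ^ (1 + ν) := by
  set u := y - x
  have hmem : ∀ t ∈ Icc (0 : ℝ) 1, x + t • u ∈ segment ℝ x y := fun t ht => by
    rw [segment_eq_image']; exact ⟨t, ht, rfl⟩
  have hg : ∀ t ∈ Icc (0 : ℝ) 1,
      HasDerivAt (fun s : ℝ => f (x + s • u)) (f' (x + t • u) u) t := by
    intro t ht
    have hline : HasDerivAt (fun s : ℝ => x + s • u) u t := by
      simpa using ((hasDerivAt_id t).smul_const u).const_add x
    exact (hf _ (hmem t ht)).comp_hasDerivAt t hline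
  have hg' : ∀ t ∈ Ioo (0 : ℝ) 1,
      f' (x + t • u) u - f' (x + (0 : ℝ) • u) u ≤ L * ‖u‖ ^ (1 + ν) * t ^ ν := by
    intro t ht
    have ht0 : 0 ≤ t := ht.1.le
    have hdist : ‖x + t • u - x‖ = t * ‖u‖ := by simp [norm_smul, abs_of_nonneg ht0]
    calc f' (x + t • u) u - f' (x + (0 : ℝ) • u) u = (f' (x + t • u) - f' x) u := by simp
      _ ≤ ‖f' (x + t • u) - f' x‖ * ‖u‖ :=
          (Real.le_norm_self _).trans (ContinuousLinearMap.le_opNorm _ _)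
      _ ≤ L * (t * ‖u‖) ^ ν * ‖u‖ := by
          rw [← hdist]; gcongr; exact hH _ (hmem t (Ioo_subset_Icc_self ht))
      _ = L * ‖u‖ ^ (1 + ν) * t ^ ν := by
          rw [Real.mul_rpow ht0 (norm_nonneg u), Real.rpow_one_add' (norm_nonneg u) (by positivity)]
          ring
  have h := le_add_deriv_add_div_of_deriv_sub_le_rpow hν hg hg'
  simp only [zero_smul, add_zero, one_smul, u, add_sub_cancel] at h
  linarith [div_mul_eq_mul_div L (1 + ν) (‖y - x‖ ^ (1 + ν))]

/-- The constant `L(δ)` of the statement; at `ν = 1` it is `L`, as `0 ^ 0 = 1` for `rpow`. -/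
noncomputable def hoelderSmoothingConstant (ν L δ : ℝ) : ℝ :=
  ((1 - ν) / ((1 + ν) * δ)) ^ ((1 - ν) / (1 + ν)) * L ^ (2 / (1 + ν))

theorem div_one_add_le_hoelderSmoothingConstant_rpow_mul {ν L δ : ℝ} (hν0 : 0 ≤ ν)
    (hν1 : ν < 1) (hL : 0 ≤ L) (hδ : 0 < δ) :
    L / (1 + ν) ≤ (hoelderSmoothingConstant ν L δ / (1 + ν)) ^ ((1 + ν) / 2) *
      (2 * δ / (1 - ν)) ^ ((1 - ν) / 2) := by
  have h1ν : 0 < 1 + ν := by linarith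
  have h1ν' : 0 < 1 - ν := by linarith
  set a : ℝ := (1 - ν) / ((1 + ν) * δ)
  set v : ℝ := 2 * δ / (1 - ν)
  have ha : 0 ≤ a := by positivity
  have hv : 0 ≤ v := by positivity
  have hC : hoelderSmoothingConstant ν L δ ^ ((1 + ν) / 2) = a ^ ((1 - ν) / 2) * L := by
    rw [hoelderSmoothingConstant, Real.mul_rpow (by positivity) (by positivity),
      ← Real.rpow_mul ha, ← Real.rpow_mul hL]
    congr 2
    · field_simp
    · rw [show 2 / (1 + ν) * ((1 + ν) / 2) = 1 by field_simp, Real.rpow_one]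
  have hav : a * v = 2 / (1 + ν) := by simp only [a, v]; field_simp
  have hC0 : 0 ≤ hoelderSmoothingConstant ν L δ := by
    unfold hoelderSmoothingConstant; positivity
  have hrhs : (hoelderSmoothingConstant ν L δ / (1 + ν)) ^ ((1 + ν) / 2) * v ^ ((1 - ν) / 2) =
      (2 / (1 + ν)) ^ ((1 - ν) / 2) * L / (1 + ν) ^ ((1 + ν) / 2) := by
    rw [Real.div_rpow hC0 h1ν.le, hC, ← hav, Real.mul_rpow ha hv]
    ring
  have hgrow : 1 ≤ (2 / (1 + ν)) ^ ((1 - ν) / 2) :=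
    Real.one_le_rpow (by rw [le_div_iff₀ h1ν]; linarith) (by linarith)
  have hshrink : (1 + ν) ^ ((1 + ν) / 2) ≤ 1 + ν :=
    Real.rpow_le_self_of_one_le (by linarith) (by linarith)
  calc L / (1 + ν) ≤ L / (1 + ν) ^ ((1 + ν) / 2) := by gcongr
    _ ≤ (2 / (1 + ν)) ^ ((1 - ν) / 2) * L / (1 + ν) ^ ((1 + ν) / 2) := by
        rw [mul_div_assoc]; exact le_mul_of_one_le_left (by positivity) hgrow
    _ = _ := hrhs.symm

theorem div_mul_rpow_le_hoelderSmoothingConstant {ν L δ t : ℝ} (hν0 : 0 ≤ ν) (hν1 : ν ≤ 1)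
    (hL : 0 ≤ L) (hδ : 0 < δ) (ht : 0 ≤ t) :
    L / (1 + ν) * t ^ (1 + ν) ≤ hoelderSmoothingConstant ν L δ / 2 * t ^ 2 + δ := by
  rcases hν1.eq_or_lt with rfl | hν1
  · norm_num [hoelderSmoothingConstant]
    linarith
  have h1ν' : 0 < 1 - ν := by linarith
  set C := hoelderSmoothingConstant ν L δ
  have hC : 0 ≤ C := by unfold C hoelderSmoothingConstant; positivity
  have hpow : t ^ (1 + ν) = (t ^ 2) ^ ((1 + ν) / 2) := by
    rw [← Real.rpow_natCast, ← Real.rpow_mul ht]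
    congr 1
    push_cast
    ring
  calc L / (1 + ν) * t ^ (1 + ν)
      ≤ (C / (1 + ν)) ^ ((1 + ν) / 2) * (2 * δ / (1 - ν)) ^ ((1 - ν) / 2) *
          (t ^ 2) ^ ((1 + ν) / 2) := by
        rw [hpow]; gcongr
        exact div_one_add_le_hoelderSmoothingConstant_rpow_mul hν0 hν1 hL hδ
    _ = (C / (1 + ν) * t ^ 2) ^ ((1 + ν) / 2) * (2 * δ / (1 - ν)) ^ ((1 - ν) / 2) := by
        rw [Real.mul_rpow (by positivity) (by positivity)]; ring
    _ ≤ (1 + ν) / 2 * (C / (1 + ν) * t ^ 2) + (1 - ν) / 2 * (2 * δ / (1 - ν)) :=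
        Real.geom_mean_le_arith_mean2_weighted (by linarith) (by linarith) (by positivity)
          (by positivity) (by ring)
    _ = C / 2 * t ^ 2 + δ := by field_simp

theorem hoelder_gradient_quadratic_majorant_general {n : ℕ}
    (Q : Set (EuclideanSpace ℝ (Fin n))) (hQconv : Convex ℝ Q)
    (f : EuclideanSpace ℝ (Fin n) → ℝ)
    (gf : EuclideanSpace ℝ (Fin n) → EuclideanSpace ℝ (Fin n))
    (hgf : ∀ w ∈ Q, HasGradientAt f (gf w) w)
    (ν Lν : ℝ) (hν0 : 0 ≤ ν) (hν1 : ν ≤ 1) (hLν : 0 ≤ Lν)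
    (hH : ∀ w ∈ Q, ∀ v ∈ Q, ‖gf w - gf v‖ ≤ Lν * ‖w - v‖ ^ ν) :
    ∀ x ∈ Q, ∀ y ∈ Q, ∀ δ : ℝ, 0 < δ →
      f y ≤ f x + ⟪gf x, y - x⟫ + Lν / (1 + ν) * ‖y - x‖ ^ (1 + ν) ∧
      f x + ⟪gf x, y - x⟫ + Lν / (1 + ν) * ‖y - x‖ ^ (1 + ν) ≤
        f x + ⟪gf x, y - x⟫ +
          ((1 - ν) / ((1 + ν) * δ)) ^ ((1 - ν) / (1 + ν)) * Lν ^ (2 / (1 + ν)) / 2 *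
            ‖y - x‖ ^ 2 + δ := by
  intro x hx y hy δ hδ
  have hseg := hQconv.segment_subset hx hy
  have hdescent := le_add_fderiv_add_rpow_of_hoelder
    (f' := fun w => InnerProductSpace.toDual ℝ (EuclideanSpace ℝ (Fin n)) (gf w)) hν0
    (fun w hw => hasGradientAt_iff_hasFDerivAt.1 (hgf w (hseg hw)))
    (fun w hw => by
      rw [← LinearIsometryEquiv.map_sub, LinearIsometryEquiv.norm_map]
      exact hH w (hseg hw) x hx)
  rw [InnerProductSpace.toDual_apply_apply] at hdescent
  have hscalar := div_mul_rpow_le_hoelderSmoothingConstant hν0 hν1 hLν hδ (norm_nonneg (y - x))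
  exact ⟨hdescent, by unfold hoelderSmoothingConstant at hscalar; linarith⟩

/-- A function with `ν`-Hölder-continuous gradient admits, for every `δ > 0`, the
quadratic upper bound with constant `L(δ) = ((1-ν)/((1+ν)δ))^{(1-ν)/(1+ν)} L_ν^{2/(1+ν)}`
shifted by `δ`. -/
theorem hoelder_gradient_quadratic_majorant {n : ℕ}
    (Q : Set (EuclideanSpace ℝ (Fin n))) (hQconv : Convex ℝ Q)
    (f : EuclideanSpace ℝ (Fin n) → ℝ) (hfconv : ConvexOn ℝ Q f)
    (gf : EuclideanSpace ℝ (Fin n) → EuclideanSpace ℝ (Fin n))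
    (hgf : ∀ w ∈ Q, HasGradientAt f (gf w) w)
    (ν Lν : ℝ) (hν0 : 0 ≤ ν) (hν1 : ν ≤ 1) (hLν : 0 ≤ Lν)
    (hH : ∀ w ∈ Q, ∀ v ∈ Q, ‖gf w - gf v‖ ≤ Lν * ‖w - v‖ ^ ν) :
    ∀ x ∈ Q, ∀ y ∈ Q, ∀ δ : ℝ, 0 < δ →
      f y ≤ f x + ⟪gf x, y - x⟫ + Lν / (1 + ν) * ‖y - x‖ ^ (1 + ν) ∧
      f x + ⟪gf x, y - x⟫ + Lν / (1 + ν) * ‖y - x‖ ^ (1 + ν) ≤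
        f x + ⟪gf x, y - x⟫ +
          ((1 - ν) / ((1 + ν) * δ)) ^ ((1 - ν) / (1 + ν)) * Lν ^ (2 / (1 + ν)) / 2 *
            ‖y - x‖ ^ 2 + δ :=
  hoelder_gradient_quadratic_majorant_general Q hQconv f gf hgf ν Lν hν0 hν1 hLν hH
end

section
/- Let Q ⊆ ℝ^n be convex, Φ : Q → ℝ^n an operator, d differentiable and 1-strongly convex with Bregman divergence V, z⁰ = argmin_{z∈Q} d(z), and ε > 0. Let the Universal Mirror Prox method generate, at each iteration k, constants M_k > 0 and points w^k = argmin_{z∈Q}{⟨Φ(z^k), z⟩ + M_k V[z^k](z)}, z^{k+1} = argmin_{z∈Q}{⟨Φ(w^k), z⟩ + M_k V[z^k](z)} such that ⟨Φ(w^k) − Φ(z^k), w^k − z^{k+1}⟩ ≤ (M_k/2)(‖w^k − z^k‖₂² + ‖w^k − z^{k+1}‖₂²) + ε/2. Then for any k ≥ 1 and any z ∈ Q: (1/Σ_{i=0}^{k−1} M_i^{−1}) · Σ_{i=0}^{k−1} M_i^{−1} ⟨Φ(w^i), w^i − z⟩ ≤ (1/Σ_{i=0}^{k−1} M_i^{−1})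 · (V[z⁰](z) − V[z^k](z)) + ε/2. -/
open scoped RealInnerProductSpace

/-- Variational inequality for a minimizer of `⟪g, ·⟫ + M * V[zz](·)` on a convex set. -/
lemma ump_vi {n : ℕ} {Q : Set (EuclideanSpace ℝ (Fin n))} (hQconv : Convex ℝ Q)
    {d : EuclideanSpace ℝ (Fin n) → ℝ}
    {gd : EuclideanSpace ℝ (Fin n) → EuclideanSpace ℝ (Fin n)}
    (hgd : ∀ w, HasGradientAt d (gd w) w)
    (g zz x u : EuclideanSpace ℝ (Fin n)) (M : ℝ)
    (hx : x ∈ Q) (hu : u ∈ Q)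
    (hmin : IsMinOn (fun v => ⟪g, v⟫ + M * (d v - d zz - ⟪gd zz, v - zz⟫)) Q x) :
    0 ≤ ⟪g, u - x⟫ + M * ⟪gd x - gd zz, u - x⟫ := by
  have h1 : HasFDerivAt (fun v : EuclideanSpace ℝ (Fin n) => ⟪g, v⟫) (innerSL ℝ g) x :=
    (innerSL ℝ g).hasFDerivAt
  have h2 : HasFDerivAt d (InnerProductSpace.toDual ℝ _ (gd x)) x :=
    hasGradientAt_iff_hasFDerivAt.mp (hgd x)
  have h3 : HasFDerivAt (fun v : EuclideanSpace ℝ (Fin n) => ⟪gd zz, v - zz⟫)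
      (innerSL ℝ (gd zz)) x := by
    have := ((innerSL ℝ (gd zz)).hasFDerivAt (x := x)).sub_const ⟪gd zz, zz⟫
    simpa [inner_sub_right] using this
  have hf : HasFDerivAt (fun v => ⟪g, v⟫ + M * (d v - d zz - ⟪gd zz, v - zz⟫))
      (innerSL ℝ g + M • ((InnerProductSpace.toDual ℝ _ (gd x) : _ →L[ℝ] ℝ)
        - innerSL ℝ (gd zz))) x :=
    h1.add (((h2.sub_const (d zz)).sub h3).const_mul M)
  have hcone : u - x ∈ posTangentConeAt Q x :=
    sub_mem_posTangentConeAt_of_segment_subset (hQconv.segment_subset hx hu)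
  have hloc : IsLocalMinOn (fun v => ⟪g, v⟫ + M * (d v - d zz - ⟪gd zz, v - zz⟫)) Q x :=
    hmin.filter_mono inf_le_right
  have h0 := hloc.hasFDerivWithinAt_nonneg hf.hasFDerivWithinAt hcone
  simpa [ContinuousLinearMap.add_apply, ContinuousLinearMap.smul_apply,
    ContinuousLinearMap.sub_apply, InnerProductSpace.toDual_apply_apply, innerSL_apply_apply,
    smul_eq_mul, inner_sub_left, mul_sub] using h0

/-- General convergence guarantee for the Universal Mirror Prox method: the
`M_i⁻¹`-weighted averages of `⟪Φ(w^i), w^i - z⟫` are bounded by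
`(V[z⁰](z) - V[z^k](z)) / Σ M_i⁻¹ + ε/2`. -/
theorem universal_mirror_prox_general_rate {n : ℕ}
    (Q : Set (EuclideanSpace ℝ (Fin n))) (hQconv : Convex ℝ Q)
    (Φ : EuclideanSpace ℝ (Fin n) → EuclideanSpace ℝ (Fin n))
    (d : EuclideanSpace ℝ (Fin n) → ℝ)
    (gd : EuclideanSpace ℝ (Fin n) → EuclideanSpace ℝ (Fin n))
    (hgd : ∀ w, HasGradientAt d (gd w) w)
    (hdsc : ∀ w v, d w + ⟪gd w, v - w⟫ + 1 / 2 * ‖v - w‖ ^ 2 ≤ d v)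
    (V : EuclideanSpace ℝ (Fin n) → EuclideanSpace ℝ (Fin n) → ℝ)
    (hV : ∀ w v, V w v = d v - d w - ⟪gd w, v - w⟫)
    (ε : ℝ) (hε : 0 < ε)
    (z w : ℕ → EuclideanSpace ℝ (Fin n)) (M : ℕ → ℝ)
    (hMpos : ∀ k, 0 < M k)
    (hz0 : z 0 ∈ Q ∧ IsMinOn d Q (z 0))
    (hw : ∀ k, w k ∈ Q ∧
      IsMinOn (fun u => ⟪Φ (z k), u⟫ + M k * V (z k) u) Q (w k))
    (hz : ∀ k, z (k + 1) ∈ Q ∧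
      IsMinOn (fun u => ⟪Φ (w k), u⟫ + M k * V (z k) u) Q (z (k + 1)))
    (hcheck : ∀ k, ⟪Φ (w k) - Φ (z k), w k - z (k + 1)⟫ ≤
      M k / 2 * (‖w k - z k‖ ^ 2 + ‖w k - z (k + 1)‖ ^ 2) + ε / 2) :
    ∀ k : ℕ, 1 ≤ k → ∀ u ∈ Q,
      (∑ i ∈ Finset.range k, (M i)⁻¹)⁻¹ *
          ∑ i ∈ Finset.range k, (M i)⁻¹ * ⟪Φ (w i), w i - u⟫ ≤
        (∑ i ∈ Finset.range k, (M i)⁻¹)⁻¹ * (V (z 0) u - V (z k) u) + ε / 2 := by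
  -- rewrite the objectives in terms of `d`
  have hVfun : ∀ zz : EuclideanSpace ℝ (Fin n), (fun v => V zz v)
      = fun v => d v - d zz - ⟪gd zz, v - zz⟫ := fun zz => funext fun v => hV zz v
  -- three-point identity
  have h3pt : ∀ a b c : EuclideanSpace ℝ (Fin n),
      ⟪gd b - gd a, c - b⟫ = V a c - V b c - V a b := by
    intro a b c
    simp only [hV, inner_sub_left, inner_sub_right]
    ring
  -- per-iteration bound
  have hstep : ∀ i : ℕ, ∀ u ∈ Q,
      ⟪Φ (w i), w i - u⟫ ≤ M i * (V (z i) u - V (z (i + 1)) u) + ε / 2 := by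
    intro i u hu
    have hminw : IsMinOn (fun v => ⟪Φ (z i), v⟫
        + M i * (d v - d (z i) - ⟪gd (z i), v - z i⟫)) Q (w i) := by
      have := (hw i).2
      simp only [hV] at this
      exact this
    have hminz : IsMinOn (fun v => ⟪Φ (w i), v⟫
        + M i * (d v - d (z i) - ⟪gd (z i), v - z i⟫)) Q (z (i + 1)) := by
      have := (hz i).2
      simp only [hV] at this
      exact this
    have hA := ump_vi hQconv hgd (Φ (w i)) (z i) (z (i + 1)) u (M i) (hz i).1 hu hminz
    have hB := ump_vi hQconv hgd (Φ (z i)) (z i) (w i) (z (i + 1)) (M i) (hw i).1 (hz i).1 hminw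
    rw [h3pt (z i) (z (i + 1)) u] at hA
    rw [h3pt (z i) (w i) (z (i + 1))] at hB
    have hC := hcheck i
    -- strong convexity lower bounds
    have hb1 : 1 / 2 * ‖w i - z i‖ ^ 2 ≤ V (z i) (w i) := by
      have := hdsc (z i) (w i); rw [hV]; linarith
    have hb2 : 1 / 2 * ‖w i - z (i + 1)‖ ^ 2 ≤ V (w i) (z (i + 1)) := by
      have := hdsc (w i) (z (i + 1))
      rw [hV, ← norm_sub_rev]
      linarith
    have hb1' := mul_le_mul_of_nonneg_left hb1 (hMpos i).le
    have hb2' := mul_le_mul_of_nonneg_left hb2 (hMpos i).le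
    -- decomposition of the inner product
    have hdec : ⟪Φ (w i), w i - u⟫ = ⟪Φ (z i), w i - z (i + 1)⟫
        + ⟪Φ (w i) - Φ (z i), w i - z (i + 1)⟫ + ⟪Φ (w i), z (i + 1) - u⟫ := by
      simp only [inner_sub_left, inner_sub_right]
      ring
    have hA' : ⟪Φ (w i), z (i + 1) - u⟫
        ≤ M i * (V (z i) u - V (z (i + 1)) u - V (z i) (z (i + 1))) := by
      have : ⟪Φ (w i), u - z (i + 1)⟫ = -⟪Φ (w i), z (i + 1) - u⟫ := by
        simp [inner_sub_right]
      rw [this] at hA; linarith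
    have hB' : ⟪Φ (z i), w i - z (i + 1)⟫
        ≤ M i * (V (z i) (z (i + 1)) - V (w i) (z (i + 1)) - V (z i) (w i)) := by
      have : ⟪Φ (z i), z (i + 1) - w i⟫ = -⟪Φ (z i), w i - z (i + 1)⟫ := by
        simp [inner_sub_right]
      rw [this] at hB; linarith
    rw [hdec]
    nlinarith [hA', hB', hC, hb1', hb2']
  intro k hk u hu
  set S := ∑ i ∈ Finset.range k, (M i)⁻¹ with hS
  have hSpos : 0 < S := Finset.sum_pos (fun i _ => inv_pos.mpr (hMpos i))
    (Finset.nonempty_range_iff.mpr (by omega))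
  have hterm : ∀ i ∈ Finset.range k, (M i)⁻¹ * ⟪Φ (w i), w i - u⟫
      ≤ (V (z i) u - V (z (i + 1)) u) + ε / 2 * (M i)⁻¹ := by
    intro i _
    have h := mul_le_mul_of_nonneg_left (hstep i u hu) (inv_nonneg.mpr (hMpos i).le)
    have hMne : M i ≠ 0 := (hMpos i).ne'
    calc (M i)⁻¹ * ⟪Φ (w i), w i - u⟫
        ≤ (M i)⁻¹ * (M i * (V (z i) u - V (z (i + 1)) u) + ε / 2) := h
      _ = (V (z i) u - V (z (i + 1)) u) + ε / 2 * (M i)⁻¹ := by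
          field_simp
  have hsum : ∑ i ∈ Finset.range k, (M i)⁻¹ * ⟪Φ (w i), w i - u⟫
      ≤ (V (z 0) u - V (z k) u) + ε / 2 * S := by
    calc ∑ i ∈ Finset.range k, (M i)⁻¹ * ⟪Φ (w i), w i - u⟫
        ≤ ∑ i ∈ Finset.range k, ((V (z i) u - V (z (i + 1)) u) + ε / 2 * (M i)⁻¹) :=
          Finset.sum_le_sum hterm
      _ = (V (z 0) u - V (z k) u) + ε / 2 * S := by
          rw [Finset.sum_add_distrib, Finset.sum_range_sub' (fun i => V (z i) u),
            ← Finset.mul_sum]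
  have := mul_le_mul_of_nonneg_left hsum (inv_nonneg.mpr hSpos.le)
  calc S⁻¹ * ∑ i ∈ Finset.range k, (M i)⁻¹ * ⟪Φ (w i), w i - u⟫
      ≤ S⁻¹ * ((V (z 0) u - V (z k) u) + ε / 2 * S) := this
    _ = S⁻¹ * (V (z 0) u - V (z k) u) + ε / 2 := by
        rw [mul_add]
        congr 1
        field_simp
end
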